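/- arXiv:2405.20681 — 2 statements merged into one kernel-verified Lean document; each statement's English description precedes it below -/
import Mathlib

section
/- Let P and Q be probability measures on a measurable space with densities p and q with respect to a common dominating measure, and let f be a bounded measurable function with values in [0,1]. Suppose inf_{w : q(w) > p(w)} f(w) - sup_{w : p(w) > q(w)} f(w) ≥ c for some constant c ≥ 0. Then E_{Q}[f] - E_{P}[f] ≥ c · TV(P, Q), where TV denotes the total variation distance. -/
/-!
Put `g = q - p`, so that `∫ g dμ = 0`. Scheffé's identity gives `TV(P, Q) = ∫ g⁺ dμ`: every
`|∫_S g|` is at most `∫ g⁺ = ∫ g⁻`, with equality for `S = {g > 0}`. The gap hypothesis provides a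
level `M` with `f ≥ M + c` where `g > 0` and `f ≤ M` where `g < 0`, so `(f - M) g ≥ c g⁺`
pointwise, and then `E_Q f - E_P f = ∫ f g = ∫ (f - M) g ≥ c ∫ g⁺`.
-/

open MeasureTheory

/-- Total variation distance between two measures: `sup_A |P(A) - Q(A)|`
over measurable sets `A`. -/
noncomputable def tvDist {Ω : Type*} [MeasurableSpace Ω]
    (P Q : Measure Ω) : ℝ :=
  ⨆ A : {A : Set Ω // MeasurableSet A}, |(P A).toReal - (Q A).toReal|

section Density

variable {Ω : Type*} [MeasurableSpace Ω] {μ : Measure Ω} {p : Ω → ℝ}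

lemma integrable_of_isFiniteMeasure_withDensity_ofReal
    [IsFiniteMeasure (μ.withDensity fun w => ENNReal.ofReal (p w))]
    (hp : AEStronglyMeasurable p μ) (hp0 : 0 ≤ᵐ[μ] p) : Integrable p μ := by
  refine ⟨hp, (hasFiniteIntegral_iff_ofReal hp0).2 ?_⟩
  rw [← setLIntegral_univ, ← withDensity_apply _ MeasurableSet.univ]
  exact measure_lt_top _ _

lemma toReal_withDensity_ofReal_apply (hp : Integrable p μ) (hp0 : 0 ≤ᵐ[μ] p)
    {S : Set Ω} (hS : MeasurableSet S) :
    (μ.withDensity (fun w => ENNReal.ofReal (p w)) S).toReal = ∫ w in S, p w ∂μ := by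
  rw [withDensity_apply _ hS, ← ofReal_integral_eq_lintegral_ofReal hp.integrableOn
    (ae_restrict_of_ae hp0), ENNReal.toReal_ofReal (integral_nonneg_of_ae (ae_restrict_of_ae hp0))]

lemma integral_eq_one_of_isProbabilityMeasure_withDensity_ofReal
    [IsProbabilityMeasure (μ.withDensity fun w => ENNReal.ofReal (p w))]
    (hp : AEStronglyMeasurable p μ) (hp0 : 0 ≤ᵐ[μ] p) : ∫ w, p w ∂μ = 1 := by
  rw [← setIntegral_univ, ← toReal_withDensity_ofReal_apply
    (integrable_of_isFiniteMeasure_withDensity_ofReal hp hp0) hp0 MeasurableSet.univ,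
    measure_univ, ENNReal.toReal_one]

lemma integral_withDensity_ofReal (hp : AEMeasurable p μ) (hp0 : 0 ≤ᵐ[μ] p) (f : Ω → ℝ) :
    ∫ w, f w ∂(μ.withDensity fun w => ENNReal.ofReal (p w)) = ∫ w, f w * p w ∂μ := by
  rw [integral_withDensity_eq_integral_toReal_smul₀ hp.ennreal_ofReal
    (ae_of_all _ fun _ => ENNReal.ofReal_lt_top)]
  refine integral_congr_ae (hp0.mono fun w hw => ?_)
  dsimp only
  rw [ENNReal.toReal_ofReal hw, smul_eq_mul, mul_comm]

end Density

section PositivePart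

variable {Ω : Type*} [MeasurableSpace Ω] {μ : Measure Ω} {g : Ω → ℝ}

lemma setIntegral_le_integral_max_zero (hg : Integrable g μ) (S : Set Ω) :
    ∫ w in S, g w ∂μ ≤ ∫ w, max (g w) 0 ∂μ :=
  (setIntegral_mono hg.integrableOn hg.pos_part.integrableOn fun _ => le_max_left _ _).trans
    (setIntegral_le_integral hg.pos_part (ae_of_all _ fun _ => le_max_right _ _))

lemma abs_setIntegral_le_integral_max_zero (hg : Integrable g μ) (hg0 : ∫ w, g w ∂μ = 0)
    (S : Set Ω) : |∫ w in S, g w ∂μ| ≤ ∫ w, max (g w) 0 ∂μ := by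
  have hneg : ∫ w, max (-g w) 0 ∂μ = ∫ w, max (g w) 0 ∂μ := by
    have h : ∀ w, max (-g w) 0 = max (g w) 0 - g w := fun w => by
      rcases le_total (g w) 0 with h | h <;> simp [h]
    simp_rw [h]
    rw [integral_sub hg.pos_part hg, hg0, sub_zero]
  have hlower := setIntegral_le_integral_max_zero (g := fun w => -g w) hg.neg S
  rw [integral_neg, hneg] at hlower
  exact abs_le.2 ⟨by linarith, setIntegral_le_integral_max_zero hg S⟩

lemma setIntegral_pos_eq_integral_max_zero (hg : Measurable g) :
    ∫ w in {w | 0 < g w}, g w ∂μ = ∫ w, max (g w) 0 ∂μ := by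
  rw [← integral_indicator (measurableSet_lt measurable_const hg)]
  congr 1 with w
  by_cases h : 0 < g w
  · simp [h, h.le]
  · simp [h, le_of_not_gt h]

end PositivePart

section Scheffe

variable {Ω : Type*} [MeasurableSpace Ω] {μ : Measure Ω} {p q : Ω → ℝ}

theorem tvDist_withDensity_ofReal (hp : Measurable p) (hq : Measurable q)
    (hpi : Integrable p μ) (hqi : Integrable q μ) (hp0 : 0 ≤ᵐ[μ] p) (hq0 : 0 ≤ᵐ[μ] q)
    (hpq : ∫ w, p w ∂μ = ∫ w, q w ∂μ) :
    tvDist (μ.withDensity fun w => ENNReal.ofReal (p w))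
        (μ.withDensity fun w => ENNReal.ofReal (q w)) = ∫ w, max (q w - p w) 0 ∂μ := by
  have hgi : Integrable (fun w => q w - p w) μ := hqi.sub hpi
  have hdiff : ∀ S, MeasurableSet S →
      |(μ.withDensity (fun w => ENNReal.ofReal (p w)) S).toReal -
        (μ.withDensity (fun w => ENNReal.ofReal (q w)) S).toReal| =
        |∫ w in S, (q w - p w) ∂μ| := fun S hS => by
    rw [toReal_withDensity_ofReal_apply hpi hp0 hS, toReal_withDensity_ofReal_apply hqi hq0 hS,
      abs_sub_comm, integral_sub hqi.integrableOn hpi.integrableOn]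
  have hbound : ∀ S, |∫ w in S, (q w - p w) ∂μ| ≤ ∫ w, max (q w - p w) 0 ∂μ :=
    abs_setIntegral_le_integral_max_zero hgi (by rw [integral_sub hqi hpi, hpq, sub_self])
  refine le_antisymm (ciSup_le fun S => (hdiff S.1 S.2).trans_le (hbound S.1)) ?_
  have hA : MeasurableSet {w | 0 < q w - p w} := measurableSet_lt measurable_const (hq.sub hp)
  calc ∫ w, max (q w - p w) 0 ∂μ = |∫ w in {w | 0 < q w - p w}, (q w - p w) ∂μ| := by
        rw [setIntegral_pos_eq_integral_max_zero (g := fun w => q w - p w) (hq.sub hp),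
          abs_of_nonneg (integral_nonneg fun _ => le_max_right _ _)]
    _ = _ := (hdiff _ hA).symm
    _ ≤ _ := le_ciSup (f := fun S : {S : Set Ω // MeasurableSet S} => _)
          ⟨_, Set.forall_mem_range.2 fun S => (hdiff S.1 S.2).trans_le (hbound S.1)⟩ ⟨_, hA⟩

end Scheffe

lemma exists_separating_level {s t : Set ℝ} {c : ℝ} (hs : BddBelow s) (ht : BddAbove t)
    (hst : ∀ x ∈ s, ∀ y ∈ t, c ≤ x - y) : ∃ M, (∀ y ∈ t, y ≤ M) ∧ ∀ x ∈ s, M + c ≤ x := by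
  rcases t.eq_empty_or_nonempty with rfl | htne
  · obtain ⟨m, hm⟩ := hs
    exact ⟨m - c, by simp, fun x hx => by linarith [hm hx]⟩
  · refine ⟨sSup t, fun y hy => le_csSup ht hy, fun x hx => ?_⟩
    have : sSup t ≤ x - c := csSup_le htne fun y hy => by linarith [hst x hx y hy]
    linarith

section Gap

variable {Ω : Type*} [MeasurableSpace Ω] {μ : Measure Ω} {f g : Ω → ℝ} {M c : ℝ}

lemma mul_integral_max_zero_le_integral_mul (hg : Integrable g μ)
    (hfg : Integrable (fun w => f w * g w) μ) (hg0 : ∫ w, g w ∂μ = 0)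
    (hpos : ∀ w, 0 < g w → M + c ≤ f w) (hneg : ∀ w, g w < 0 → f w ≤ M) :
    c * ∫ w, max (g w) 0 ∂μ ≤ ∫ w, f w * g w ∂μ := by
  have hpt : ∀ w, c * max (g w) 0 ≤ f w * g w - M * g w := fun w => by
    rw [← sub_mul]
    rcases lt_trichotomy (g w) 0 with h | h | h
    · rw [max_eq_right h.le, mul_zero]
      exact mul_nonneg_of_nonpos_of_nonpos (by linarith [hneg w h]) h.le
    · simp [h]
    · rw [max_eq_left h.le]
      exact mul_le_mul_of_nonneg_right (by linarith [hpos w h]) h.le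
  calc c * ∫ w, max (g w) 0 ∂μ = ∫ w, c * max (g w) 0 ∂μ := (integral_const_mul _ _).symm
    _ ≤ ∫ w, (f w * g w - M * g w) ∂μ :=
        integral_mono (hg.pos_part.const_mul c) (hfg.sub (hg.const_mul M)) hpt
    _ = ∫ w, f w * g w ∂μ := by
        rw [integral_sub hfg (hg.const_mul M), integral_const_mul, hg0, mul_zero, sub_zero]

end Gap

theorem expectation_gap_ge_tv_general {Ω : Type*} [MeasurableSpace Ω]
    (μ P Q : Measure Ω) [IsProbabilityMeasure P] [IsProbabilityMeasure Q]
    (p q : Ω → ℝ) (hp : Measurable p) (hq : Measurable q)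
    (hp0 : ∀ w, 0 ≤ p w) (hq0 : ∀ w, 0 ≤ q w)
    (hP : P = μ.withDensity (fun w => ENNReal.ofReal (p w)))
    (hQ : Q = μ.withDensity (fun w => ENNReal.ofReal (q w)))
    (f : Ω → ℝ) (hf : Measurable f) (hf01 : ∀ w, f w ∈ Set.Icc (0 : ℝ) 1)
    (c : ℝ)
    (hgap : ∀ w w', q w > p w → p w' > q w' → f w - f w' ≥ c) :
    ∫ w, f w ∂Q - ∫ w, f w ∂P ≥ c * tvDist P Q := by
  subst hP hQ
  have hp0' : 0 ≤ᵐ[μ] p := ae_of_all _ hp0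
  have hq0' : 0 ≤ᵐ[μ] q := ae_of_all _ hq0
  have hpi := integrable_of_isFiniteMeasure_withDensity_ofReal hp.aestronglyMeasurable hp0'
  have hqi := integrable_of_isFiniteMeasure_withDensity_ofReal hq.aestronglyMeasurable hq0'
  have hpq : ∫ w, p w ∂μ = ∫ w, q w ∂μ :=
    (integral_eq_one_of_isProbabilityMeasure_withDensity_ofReal hp.aestronglyMeasurable hp0').trans
      (integral_eq_one_of_isProbabilityMeasure_withDensity_ofReal hq.aestronglyMeasurable hq0').symm
  have hf_bdd : ∀ᵐ w ∂μ, ‖f w‖ ≤ 1 :=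
    ae_of_all _ fun w => abs_le.2 ⟨by linarith [(hf01 w).1], (hf01 w).2⟩
  obtain ⟨M, hMB, hMA⟩ := exists_separating_level
    (s := f '' {w | p w < q w}) (t := f '' {w | q w < p w})
    ⟨0, Set.forall_mem_image.2 fun w _ => (hf01 w).1⟩
    ⟨1, Set.forall_mem_image.2 fun w _ => (hf01 w).2⟩
    (Set.forall_mem_image.2 fun w hw => Set.forall_mem_image.2 fun w' hw' => hgap w w' hw hw')
  rw [tvDist_withDensity_ofReal hp hq hpi hqi hp0' hq0' hpq,
    integral_withDensity_ofReal hp.aemeasurable hp0',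
    integral_withDensity_ofReal hq.aemeasurable hq0',
    ← integral_sub (hqi.bdd_mul hf.aestronglyMeasurable hf_bdd)
      (hpi.bdd_mul hf.aestronglyMeasurable hf_bdd)]
  simp_rw [← mul_sub]
  exact mul_integral_max_zero_le_integral_mul (hqi.sub hpi)
    ((hqi.sub hpi).bdd_mul hf.aestronglyMeasurable hf_bdd)
    (by rw [integral_sub hqi hpi, hpq, sub_self])
    (fun w hw => hMA _ ⟨w, sub_pos.1 hw, rfl⟩) (fun w hw => hMB _ ⟨w, sub_neg.1 hw, rfl⟩)

/-- if `inf_{q > p} f - sup_{p > q} f ≥ c ≥ 0` then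
`E_Q[f] - E_P[f] ≥ c · TV(P, Q)`. -/
theorem expectation_gap_ge_tv {Ω : Type*} [MeasurableSpace Ω]
    (μ P Q : Measure Ω) [IsProbabilityMeasure P] [IsProbabilityMeasure Q]
    (p q : Ω → ℝ) (hp : Measurable p) (hq : Measurable q)
    (hp0 : ∀ w, 0 ≤ p w) (hq0 : ∀ w, 0 ≤ q w)
    (hP : P = μ.withDensity (fun w => ENNReal.ofReal (p w)))
    (hQ : Q = μ.withDensity (fun w => ENNReal.ofReal (q w)))
    (f : Ω → ℝ) (hf : Measurable f) (hf01 : ∀ w, f w ∈ Set.Icc (0 : ℝ) 1)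
    (c : ℝ) (hc : 0 ≤ c)
    (hgap : ∀ w w', q w > p w → p w' > q w' → f w - f w' ≥ c) :
    ∫ w, f w ∂Q - ∫ w, f w ∂P ≥ c * tvDist P Q :=
  expectation_gap_ge_tv_general μ P Q p q hp hq hp0 hq0 hP hQ f hf hf01 c hgap
end

section
/- Let U : W → ℝ be a bounded measurable utility function on a measurable space W, let P and P̃ be probability measures on W with densities with respect to a common dominating measure, and let w* attain the supremum of U over the union of the supports of P and P̃. Let α > 0 and define W_α = {w : U(w*) − U(w) ≤ α}. Assume: (i) P is supported on the set of maximizers of U (i.e., U(w) = U(w*) P-almost surely); (ii) ∫ 1{w ∈ W_α} dP̃(w) ≤ TV(P, P̃)/2. Then E_P[U] − E_{P̃}[U] ≥ (α/2) · TV(P, P̃). -/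
/-!
Since `P` sits on the maximisers, `E_P[U] = U(w*)`. The density of `P̃` vanishes wherever `U > U(w*)`,
so `P̃`-a.e. `U ≤ U(w*)`, and off `W_α` even `U ≤ U(w*) - α`; hence
`E_{P̃}[U] ≤ U(w*) - α + α P̃(W_α) ≤ U(w*) - α + α TV/2`. The loss is thus at least `α (1 - TV/2)`,
which dominates `α TV/2` because `TV ≤ 1`.
-/

open MeasureTheory

theorem tvDist_le_one {Ω : Type*} [MeasurableSpace Ω] (P Q : Measure Ω)
    [IsProbabilityMeasure P] [IsProbabilityMeasure Q] : tvDist P Q ≤ 1 := by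
  refine ciSup_le fun A => abs_sub_le_iff.mpr ⟨?_, ?_⟩ <;> simp only [← measureReal_def] <;>
    linarith [measureReal_le_one (μ := P) (s := A.1), measureReal_le_one (μ := Q) (s := A.1),
      measureReal_nonneg (μ := P) (s := A.1), measureReal_nonneg (μ := Q) (s := A.1)]

theorem ae_notMem_withDensity_ofReal {W : Type*} [MeasurableSpace W] {μ : Measure W}
    {f : W → ℝ} {s : Set W} (hs : MeasurableSet s) (hf : ∀ w ∈ s, f w ≤ 0) :
    ∀ᵐ w ∂μ.withDensity (fun w => ENNReal.ofReal (f w)), w ∉ s := by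
  rw [ae_iff]
  simp only [not_not, Set.ofPred_mem_eq]
  rw [withDensity_apply _ hs,
    setLIntegral_congr_fun hs fun w hw => ENNReal.ofReal_eq_zero.mpr (hf w hw)]
  simp

theorem integral_le_of_ae_le_of_ae_le_off {W : Type*} [MeasurableSpace W] {ν : Measure W}
    [IsProbabilityMeasure ν] {U : W → ℝ} (hU : Integrable U ν) {S : Set W} (hS : MeasurableSet S)
    {c α : ℝ} (hle : ∀ᵐ w ∂ν, U w ≤ c) (hoff : ∀ᵐ w ∂ν, w ∉ S → U w ≤ c - α) :
    ∫ w, U w ∂ν ≤ c - α + α * ν.real S := by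
  have hind : Integrable (S.indicator fun _ => α) ν := (integrable_const α).indicator hS
  have hpt : ∀ᵐ w ∂ν, U w ≤ c - α + S.indicator (fun _ => α) w := by
    filter_upwards [hle, hoff] with w hw hw'
    by_cases h : w ∈ S
    · simp only [Set.indicator_of_mem h]
      linarith
    · simpa [Set.indicator_of_notMem h] using hw' h
  calc ∫ w, U w ∂ν ≤ ∫ w, (c - α + S.indicator (fun _ => α) w) ∂ν :=
        integral_mono_ae hU ((integrable_const _).add hind) hpt
    _ = c - α + α * ν.real S := by
        rw [integral_add (integrable_const _) hind, integral_indicator_const _ hS]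
        simp [mul_comm]

theorem utility_loss_ge_tv_general {W : Type*} [MeasurableSpace W]
    (μ P Ptilde : Measure W) [IsProbabilityMeasure P] [IsProbabilityMeasure Ptilde]
    (p ptilde : W → ℝ)
    (hPt : Ptilde = μ.withDensity (fun w => ENNReal.ofReal (ptilde w)))
    (U : W → ℝ) (hU : Measurable U) (M : ℝ) (hUbdd : ∀ w, |U w| ≤ M)
    (wstar : W)
    (hwstar_max : ∀ w, (p w > 0 ∨ ptilde w > 0) → U w ≤ U wstar)
    (α : ℝ) (hα : 0 < α)
    (hmax : ∀ᵐ w ∂P, U w = U wstar)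
    (hmass : (Ptilde {w | U wstar - U w ≤ α}).toReal ≤ tvDist P Ptilde / 2) :
    ∫ w, U w ∂P - ∫ w, U w ∂Ptilde ≥ (α / 2) * tvDist P Ptilde := by
  have hEP : ∫ w, U w ∂P = U wstar := by simp [integral_congr_ae hmax]
  have hle : ∀ᵐ w ∂Ptilde, U w ≤ U wstar := by
    have hout := ae_notMem_withDensity_ofReal (μ := μ) (measurableSet_lt measurable_const hU)
      fun w (hw : U wstar < U w) => not_lt.mp fun h => hw.not_ge (hwstar_max w (Or.inr h))
    rw [hPt]
    filter_upwards [hout] with w hw using not_lt.mp hw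
  have hoff : ∀ᵐ w ∂Ptilde, w ∉ {w | U wstar - U w ≤ α} → U w ≤ U wstar - α :=
    ae_of_all _ fun w hw => by simp only [Set.mem_ofPred_eq, not_le] at hw; linarith
  have hint : Integrable U Ptilde := .of_bound hU.aestronglyMeasurable M (ae_of_all _ hUbdd)
  have hEPt := integral_le_of_ae_le_of_ae_le_off hint (S := {w | U wstar - U w ≤ α})
    (measurableSet_le (measurable_const.sub hU) measurable_const) hle hoff
  rw [measureReal_def] at hEPt
  linarith [mul_le_mul_of_nonneg_left (tvDist_le_one P Ptilde) hα.le,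
    mul_le_mul_of_nonneg_left hmass hα.le]

/-- utility loss is lower bounded by `(α/2) · TV(P, P̃)`. -/
theorem utility_loss_ge_tv {W : Type*} [MeasurableSpace W]
    (μ P Ptilde : Measure W) [IsProbabilityMeasure P] [IsProbabilityMeasure Ptilde]
    (p ptilde : W → ℝ) (hp : Measurable p) (hptilde : Measurable ptilde)
    (hp0 : ∀ w, 0 ≤ p w) (hptilde0 : ∀ w, 0 ≤ ptilde w)
    (hP : P = μ.withDensity (fun w => ENNReal.ofReal (p w)))
    (hPt : Ptilde = μ.withDensity (fun w => ENNReal.ofReal (ptilde w)))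
    (U : W → ℝ) (hU : Measurable U) (M : ℝ) (hUbdd : ∀ w, |U w| ≤ M)
    (wstar : W)
    (hwstar_mem : p wstar > 0 ∨ ptilde wstar > 0)
    (hwstar_max : ∀ w, (p w > 0 ∨ ptilde w > 0) → U w ≤ U wstar)
    (α : ℝ) (hα : 0 < α)
    (hmax : ∀ᵐ w ∂P, U w = U wstar)
    (hmass : (Ptilde {w | U wstar - U w ≤ α}).toReal ≤ tvDist P Ptilde / 2) :
    ∫ w, U w ∂P - ∫ w, U w ∂Ptilde ≥ (α / 2) * tvDist P Ptilde :=
  utility_loss_ge_tv_general μ P Ptilde p ptilde hPt U hU M hUbdd wstar hwstar_max α hα hmax hmass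
end
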